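/- Define E(c) = (4ρ²)/(15(ρ+1)) · (5(ρ+2)√(b + (b−a)/ρ) + (bρ + b + a)√(ρ/(bρ + b − a))), where ρ = c² − 1. Then for 0 < a < b, E is strictly increasing in c on (1, ∞), i.e., dE/dc > 0 for all c > 1. -/

import Mathlib

/-- The explicit energy of the Benney-Luke solitary wave of speed `c`, with `ρ = c² - 1`:
`E(c) = (4ρ²)/(15(ρ+1)) (5(ρ+2)√(b+(b−a)/ρ) + (bρ+b+a)√(ρ/(bρ+b−a)))`. -/
noncomputable def solitaryEnergy (a b c : ℝ) : ℝ :=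
  (4 * (c ^ 2 - 1) ^ 2) / (15 * ((c ^ 2 - 1) + 1)) *
    (5 * ((c ^ 2 - 1) + 2) * Real.sqrt (b + (b - a) / (c ^ 2 - 1)) +
      (b * (c ^ 2 - 1) + b + a) * Real.sqrt ((c ^ 2 - 1) / (b * (c ^ 2 - 1) + b - a)))

/-!
Both square roots in `E` are rational multiples of `√(ρ³/(bρ + b - a))`, so in the variable
`ρ = c² - 1` the energy is `4/15 · Q(ρ)/(ρ+1) · √(ρ³/(bρ + b - a))` with
`Q(ρ) = 6bρ² + (16b - 4a)ρ + 10(b - a)`, and `Q(ρ)/(ρ+1) = 6bρ + 10b - 4a - 6a/(ρ+1)`.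
Each factor is positive and strictly increasing in `ρ` (with derivatives `6b + 6a/(ρ+1)²` and a
positive multiple of `ρ²(2bρ + 3(b - a))`), hence so is their product, and `ρ` increases with `c`.
-/

open Real

noncomputable def solitaryEnergyRho (a b ρ : ℝ) : ℝ :=
  4 / 15 * (6 * b * ρ + 10 * b - 4 * a - 6 * a / (ρ + 1)) * √(ρ ^ 3 / (b * ρ + b - a))

lemma sqrt_sq_mul {x y : ℝ} (hx : 0 ≤ x) : √(x ^ 2 * y) = x * √y := by
  rw [sqrt_mul (sq_nonneg x), sqrt_sq hx]

section

variable {a b ρ : ℝ}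

lemma solitaryEnergy_eq_solitaryEnergyRho {c : ℝ} (ha : 0 < a) (hab : a < b) (hc : 1 < c) :
    solitaryEnergy a b c = solitaryEnergyRho a b (c ^ 2 - 1) := by
  have hρ : 0 < c ^ 2 - 1 := by nlinarith
  have hv : 0 < b * (c ^ 2 - 1) + b - a := by nlinarith
  rw [solitaryEnergy]
  generalize c ^ 2 - 1 = ρ at hρ hv ⊢
  have h₁ : √(b + (b - a) / ρ) = (b * ρ + b - a) / ρ ^ 2 * √(ρ ^ 3 / (b * ρ + b - a)) := by
    rw [← sqrt_sq_mul (by positivity)]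
    congr 1
    field_simp
    ring
  have h₂ : √(ρ / (b * ρ + b - a)) = 1 / ρ * √(ρ ^ 3 / (b * ρ + b - a)) := by
    rw [← sqrt_sq_mul (by positivity)]
    congr 1
    field_simp
  rw [solitaryEnergyRho, h₁, h₂]
  field_simp
  ring

lemma hasDerivAt_energy_coeff (hρ : ρ + 1 ≠ 0) :
    HasDerivAt (fun x ↦ 6 * b * x + 10 * b - 4 * a - 6 * a / (x + 1))
      (6 * b + 6 * a / (ρ + 1) ^ 2) ρ := by
  refine (((((hasDerivAt_id' ρ).const_mul (6 * b)).add_const (10 * b)).sub_const (4 * a)).sub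
    ((hasDerivAt_const ρ (6 * a)).div ((hasDerivAt_id' ρ).add_const 1) hρ)).congr_deriv ?_
  ring

lemma hasDerivAt_sqrt_cube_div (hρ : 0 < ρ) (hv : 0 < b * ρ + b - a) :
    HasDerivAt (fun x ↦ √(x ^ 3 / (b * x + b - a)))
      ((3 * ρ ^ 2 * (b * ρ + b - a) - ρ ^ 3 * b) / (b * ρ + b - a) ^ 2 /
        (2 * √(ρ ^ 3 / (b * ρ + b - a)))) ρ := by
  have hv' : HasDerivAt (fun x ↦ b * x + b - a) b ρ := by
    simpa using (((hasDerivAt_id ρ).const_mul b).add_const b).sub_const a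
  simpa using ((hasDerivAt_pow 3 ρ).div hv' hv.ne').sqrt (div_pos (pow_pos hρ 3) hv).ne'

lemma exists_pos_hasDerivAt_solitaryEnergyRho (ha : 0 < a) (hab : a < b) (hρ : 0 < ρ) :
    ∃ d, 0 < d ∧ HasDerivAt (solitaryEnergyRho a b) d ρ := by
  have hb : 0 < b := ha.trans hab
  have hv : 0 < b * ρ + b - a := by nlinarith
  have hcoeff : 0 < 6 * b * ρ + 10 * b - 4 * a - 6 * a / (ρ + 1) := by
    have : 6 * a / (ρ + 1) < 6 * a := div_lt_self (by positivity) (by linarith)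
    linarith [mul_pos hb hρ]
  have hcube : 0 < 3 * ρ ^ 2 * (b * ρ + b - a) - ρ ^ 3 * b := by
    have : 3 * ρ ^ 2 * (b * ρ + b - a) - ρ ^ 3 * b = ρ ^ 2 * (2 * b * ρ + 3 * (b - a)) := by ring
    rw [this]
    have : 0 < b - a := by linarith
    positivity
  have hs : 0 < √(ρ ^ 3 / (b * ρ + b - a)) := sqrt_pos.2 (by positivity)
  refine ⟨_, ?_, ((hasDerivAt_energy_coeff (by positivity)).const_mul (4 / 15)).mul
    (hasDerivAt_sqrt_cube_div hρ hv)⟩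
  exact add_pos (mul_pos (by positivity) hs)
    (mul_pos (by positivity) (div_pos (div_pos hcube (by positivity)) (by positivity)))

lemma exists_pos_hasDerivAt_solitaryEnergy {c : ℝ} (ha : 0 < a) (hab : a < b) (hc : 1 < c) :
    ∃ d, 0 < d ∧ HasDerivAt (solitaryEnergy a b) d c := by
  obtain ⟨d, hd, hder⟩ :=
    exists_pos_hasDerivAt_solitaryEnergyRho ha hab (show 0 < c ^ 2 - 1 by nlinarith)
  have hρ : HasDerivAt (fun x ↦ x ^ 2 - 1) (2 * c) c := by
    simpa using (hasDerivAt_pow 2 c).sub_const 1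
  refine ⟨d * (2 * c), by nlinarith, (hder.comp c hρ).congr_of_eventuallyEq ?_⟩
  filter_upwards [Ioi_mem_nhds hc] with x hx
  exact solitaryEnergy_eq_solitaryEnergyRho ha hab hx

end

/-- For `0 < a < b`, the solitary-wave energy `E(c)` is strictly increasing on `(1, ∞)`,
i.e. `dE/dc > 0` for every `c > 1`. -/
theorem solitaryEnergy_strictMono (a b : ℝ) (ha : 0 < a) (hab : a < b) :
    StrictMonoOn (solitaryEnergy a b) (Set.Ioi 1) ∧
      ∀ c : ℝ, 1 < c → 0 < deriv (solitaryEnergy a b) c := by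
  have hderiv : ∀ c : ℝ, 1 < c → 0 < deriv (solitaryEnergy a b) c := fun c hc ↦ by
    obtain ⟨d, hd, h⟩ := exists_pos_hasDerivAt_solitaryEnergy ha hab hc
    rwa [h.deriv]
  refine ⟨strictMonoOn_of_deriv_pos (convex_Ioi 1) (fun c hc ↦ ?_) (by simpa using hderiv), hderiv⟩
  obtain ⟨d, -, h⟩ := exists_pos_hasDerivAt_solitaryEnergy ha hab hc
  exact h.continuousAt.continuousWithinAt
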